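/- Let E, A be n×n real matrices with rank(E) = r, and suppose invertible M, N give MEN = [[I_r,0],[0,0]] and MAN = [[A₁₁,A₁₂],[A₂₁,A₂₂]]. Then deg(det(sE − A)) = r if and only if A₂₂ is invertible. -/
import Mathlib


open Matrix Polynomial

private lemma coeff_det_X_sub_C_card {n : Type*} [Fintype n] [DecidableEq n] {α : Type*}
    [CommRing α] (G H : Matrix n n α) :
    coeff (det ((X : α[X]) • G.map C - H.map C)) (Fintype.card n) = G.det := by
  have : (X : α[X]) • G.map C - H.map C = (X : α[X]) • G.map C + (-H).map C := by
    rw [sub_eq_add_neg]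
    congr 1
    ext i j
    simp
  rw [this, Polynomial.coeff_det_X_add_C_card]

private lemma natDegree_det_X_sub_C_le {n : Type*} [Fintype n] [DecidableEq n] {α : Type*}
    [CommRing α] (G H : Matrix n n α) :
    natDegree (det ((X : α[X]) • G.map C - H.map C)) ≤ Fintype.card n := by
  have : (X : α[X]) • G.map C - H.map C = (X : α[X]) • G.map C + (-H).map C := by
    rw [sub_eq_add_neg]
    congr 1
    ext i j
    simp
  rw [this]
  exact Polynomial.natDegree_det_X_add_C_le _ _

private lemma matrixFromBlocks_sub {R n m o p : Type*} [AddGroup R]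
    (a : Matrix n o R) (b : Matrix n p R) (c : Matrix m o R) (d : Matrix m p R)
    (a' : Matrix n o R) (b' : Matrix n p R) (c' : Matrix m o R) (d' : Matrix m p R) :
    fromBlocks a b c d - fromBlocks a' b' c' d' =
      fromBlocks (a - a') (b - b') (c - c') (d - d') := by
  ext (i | i) (j | j) <;> simp

/-- With `M E N = [[I_r,0],[0,0]]` and `M A N = [[A11,A12],[A21,A22]]`,
`deg det(s E - A) = r` iff `A22` is invertible. -/
theorem degree_det_eq_rank_iff_isUnit {r m : ℕ}
    (E A : Matrix (Fin r ⊕ Fin m) (Fin r ⊕ Fin m) ℝ)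
    (M N : Matrix (Fin r ⊕ Fin m) (Fin r ⊕ Fin m) ℝ)
    (hM : IsUnit M) (hN : IsUnit N)
    (A11 : Matrix (Fin r) (Fin r) ℝ) (A12 : Matrix (Fin r) (Fin m) ℝ)
    (A21 : Matrix (Fin m) (Fin r) ℝ) (A22 : Matrix (Fin m) (Fin m) ℝ)
    (hrk : E.rank = r)
    (hE : M * E * N = fromBlocks 1 0 0 0)
    (hA : M * A * N = fromBlocks A11 A12 A21 A22) :
    ((X : ℝ[X]) • E.map C - A.map C).det.degree = (r : ℕ) ↔ IsUnit A22 := by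
  classical
  have hcard : Fintype.card (Fin r ⊕ Fin m) = r + m := by simp
  set D : Matrix (Fin r ⊕ Fin m) (Fin r ⊕ Fin m) ℝ := fromBlocks 1 0 0 0 with hD
  set B : Matrix (Fin r ⊕ Fin m) (Fin r ⊕ Fin m) ℝ := fromBlocks A11 A12 A21 A22 with hB
  set L : Matrix (Fin r ⊕ Fin m) (Fin r ⊕ Fin m) ℝ[X] :=
    (X : ℝ[X]) • E.map C - A.map C with hL
  set Q : ℝ[X] := ((X : ℝ[X]) • D.map C - B.map C).det with hQ
  have hMd : M.det ≠ 0 := (M.isUnit_iff_isUnit_det.mp hM).ne_zero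
  have hNd : N.det ≠ 0 := (N.isUnit_iff_isUnit_det.mp hN).ne_zero
  -- Step 1:  C(det M) * det L * C(det N) = Q
  have hmat : (M.map C) * L * (N.map C) = (X : ℝ[X]) • D.map C - B.map C := by
    rw [hL, Matrix.mul_sub, Matrix.sub_mul, Matrix.mul_smul, Matrix.smul_mul,
      ← Matrix.map_mul, ← Matrix.map_mul, ← Matrix.map_mul, ← Matrix.map_mul, hE, hA]
  have hdetQ : C M.det * L.det * C N.det = Q := by
    rw [hQ, ← hmat, Matrix.det_mul, Matrix.det_mul]
    rw [← RingHom.mapMatrix_apply, ← RingHom.mapMatrix_apply, ← RingHom.map_det,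
      ← RingHom.map_det]
  have hdegLQ : L.det.degree = Q.degree := by
    rw [← hdetQ, degree_mul, degree_mul, degree_C hMd, degree_C hNd, zero_add, add_zero]
  -- Step 2:  X^m * Q = det (X • G - H) for real matrices G, H
  set G : Matrix (Fin r ⊕ Fin m) (Fin r ⊕ Fin m) ℝ := fromBlocks 1 0 (-A21) (-A22) with hG
  set Hm : Matrix (Fin r ⊕ Fin m) (Fin r ⊕ Fin m) ℝ := fromBlocks A11 A12 0 0 with hHm
  set R : ℝ[X] := ((X : ℝ[X]) • G.map C - Hm.map C).det with hR
  have hfac : (fromBlocks 1 0 0 ((X : ℝ[X]) • 1) :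
      Matrix (Fin r ⊕ Fin m) (Fin r ⊕ Fin m) ℝ[X]) * ((X : ℝ[X]) • D.map C - B.map C)
      = (X : ℝ[X]) • G.map C - Hm.map C := by
    have hneg : ∀ {a b : Type} [Fintype a] [Fintype b] (P : Matrix a b ℝ),
        (-P).map (C : ℝ → ℝ[X]) = -(P.map C) := by
      intro a b _ _ P; ext i j; simp
    rw [hD, hB, hG, hHm, fromBlocks_map, fromBlocks_map, fromBlocks_map, fromBlocks_map]
    simp only [Matrix.map_zero _ (map_zero C), Matrix.map_one _ (map_zero C) (map_one C)]
    rw [fromBlocks_smul, fromBlocks_smul, matrixFromBlocks_sub, matrixFromBlocks_sub,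
      fromBlocks_multiply]
    refine fromBlocks_inj.mpr ⟨?_, ?_, ?_, ?_⟩ <;>
      simp [Matrix.smul_mul, hneg, smul_neg, sub_eq_add_neg]
  have hRQ : R = X ^ m * Q := by
    rw [hR, ← hfac, Matrix.det_mul, Matrix.det_fromBlocks_zero₁₂, Matrix.det_one, one_mul,
      Matrix.det_smul, Matrix.det_one, mul_one, Fintype.card_fin]
  have hGdet : G.det = (-1) ^ m * A22.det := by
    rw [hG, Matrix.det_fromBlocks_zero₁₂, Matrix.det_one, one_mul, Matrix.det_neg,
      Fintype.card_fin]
  constructor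
  · -- degree = r → IsUnit A22
    intro hdeg
    have hQdeg : Q.degree = (r : ℕ) := by rw [← hdegLQ]; exact hdeg
    have hQ0 : Q ≠ 0 := fun h => by simp [h] at hQdeg
    have hR0 : R ≠ 0 := by
      rw [hRQ]; exact mul_ne_zero (pow_ne_zero _ X_ne_zero) hQ0
    have hQnat : Q.natDegree = r := natDegree_eq_of_degree_eq_some hQdeg
    have hRnat : R.natDegree = r + m := by
      rw [hRQ, natDegree_mul (pow_ne_zero _ X_ne_zero) hQ0, natDegree_X_pow, hQnat, add_comm]
    have hlead : R.coeff (r + m) ≠ 0 := by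
      rw [← hRnat]
      exact fun h => hR0 (leadingCoeff_eq_zero.mp h)
    have hcoeff : R.coeff (r + m) = G.det := by
      rw [hR, ← hcard]
      exact coeff_det_X_sub_C_card G Hm
    rw [hcoeff, hGdet] at hlead
    have : A22.det ≠ 0 := fun h => hlead (by rw [h, mul_zero])
    exact A22.isUnit_iff_isUnit_det.mpr (isUnit_iff_ne_zero.mpr this)
  · -- IsUnit A22 → degree = r
    intro hA22
    have hGd : IsUnit G.det := by
      rw [hGdet]
      exact (IsUnit.pow m (isUnit_one.neg)).mul (A22.isUnit_iff_isUnit_det.mp hA22)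
    have hfac2 : (X : ℝ[X]) • G.map C - Hm.map C = G.map C * charmatrix (G⁻¹ * Hm) := by
      rw [charmatrix, Matrix.mul_sub, scalar_apply, ← smul_one_eq_diagonal, mul_smul_comm,
        mul_one, RingHom.mapMatrix_apply, ← Matrix.map_mul, ← Matrix.mul_assoc,
        Matrix.mul_nonsing_inv G hGd, Matrix.one_mul]
    have hRdeg : R.degree = ((r + m : ℕ) : WithBot ℕ) := by
      rw [hR, hfac2, Matrix.det_mul, ← RingHom.mapMatrix_apply, ← RingHom.map_det,
        ← Matrix.charpoly]
      rw [degree_mul, degree_C hGd.ne_zero, zero_add,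
        Matrix.charpoly_degree_eq_dim, hcard]
    have hQdeg : Q.degree = (r : ℕ) := by
      have h1 : ((m : ℕ) : WithBot ℕ) + Q.degree = ((m : ℕ) : WithBot ℕ) + (r : ℕ) := by
        rw [← degree_X_pow (R := ℝ) m, ← degree_mul, ← hRQ, hRdeg, degree_X_pow,
          Nat.cast_add, add_comm]
      exact WithBot.add_left_cancel (by simp) h1
    rw [hdegLQ, hQdeg]
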